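/- arXiv:0708.2212 — 2 statements merged into one kernel-verified Lean document; each statement's English description precedes it below -/
import Mathlib

section
/- For every τ ∈ B_n, the length ℓ_B(τ) equals n - (1/2)·(the number of orbits A of τ such that A ≠ -A). -/
/-!  Common setup: annular non-crossing partitions of type B, following
Goulden–Nica–Oancea, "Enumerative properties of NC^(B)(p,q)". -/

/-- The underlying set `{±1, …, ±n}`, realized inside `ℤ`. -/
def signedSet (n : ℕ) : Set ℤ := {x : ℤ | x ≠ 0 ∧ |x| ≤ (n : ℤ)}

/-- Membership in the hyperoctahedral group `B_n`, realized as the permutations of `ℤ`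
that commute with negation and fix every point outside `{±1, …, ±n}`. -/
def inB (n : ℕ) (π : Equiv.Perm ℤ) : Prop :=
  (∀ x : ℤ, π (-x) = -(π x)) ∧ ∀ x : ℤ, x ∉ signedSet n → π x = x

/-- The set of generators of `B_n`:
`(i,j)(-i,-j)`, `(i,-j)(-i,j)` for `1 ≤ i ≠ j ≤ n`, and `(i,-i)` for `1 ≤ i ≤ n`. -/
def genB (n : ℕ) : Set (Equiv.Perm ℤ) :=
  {π | (∃ i j : ℤ, 1 ≤ i ∧ i ≤ (n : ℤ) ∧ 1 ≤ j ∧ j ≤ (n : ℤ) ∧ i ≠ j ∧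
          π = Equiv.swap i j * Equiv.swap (-i) (-j)) ∨
       (∃ i j : ℤ, 1 ≤ i ∧ i ≤ (n : ℤ) ∧ 1 ≤ j ∧ j ≤ (n : ℤ) ∧ i ≠ j ∧
          π = Equiv.swap i (-j) * Equiv.swap (-i) j) ∨
       (∃ i : ℤ, 1 ≤ i ∧ i ≤ (n : ℤ) ∧ π = Equiv.swap i (-i))}

/-- The length function `ℓ_B` on `B_n`: the least `k` such that `τ` is a product of `k`
generators from `genB n` (the empty product being the identity). -/
noncomputable def lenB (n : ℕ) (τ : Equiv.Perm ℤ) : ℕ :=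
  sInf {k : ℕ | ∃ l : List (Equiv.Perm ℤ),
    l.length = k ∧ (∀ g ∈ l, g ∈ genB n) ∧ l.prod = τ}

/-- The partial order on `B_n`:  `τ ≤ σ` iff `ℓ_B(σ) = ℓ_B(τ) + ℓ_B(τ⁻¹σ)`. -/
def leB (n : ℕ) (τ σ : Equiv.Perm ℤ) : Prop :=
  lenB n σ = lenB n τ + lenB n (τ⁻¹ * σ)

/-- The permutation `γ_{p,q} = (1,…,p,-1,…,-p)(p+1,…,p+q,-(p+1),…,-(p+q))`. -/
def gammaPQ (p q : ℕ) : Equiv.Perm ℤ :=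
  (((List.range p).map fun i => ((i : ℤ) + 1)) ++
      ((List.range p).map fun i => -((i : ℤ) + 1))).formPerm *
    (((List.range q).map fun i => ((p : ℤ) + (i : ℤ) + 1)) ++
      ((List.range q).map fun i => -((p : ℤ) + (i : ℤ) + 1))).formPerm

/-- The long cycle `γ_n = (1,…,n,-1,…,-n)` of `B_n` (disc case). -/
def gammaDisc (n : ℕ) : Equiv.Perm ℤ :=
  (((List.range n).map fun i => ((i : ℤ) + 1)) ++
    ((List.range n).map fun i => -((i : ℤ) + 1))).formPerm

/-- The annular non-crossing permutations of type B: `S^B_nc(p,q) = [ε, γ_{p,q}] ⊆ B_{p+q}`. -/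
def SncB (p q : ℕ) : Set (Equiv.Perm ℤ) :=
  {τ | inB (p + q) τ ∧ leB (p + q) τ (gammaPQ p q)}

/-- The orbit of `x` under the permutation `τ`. -/
def permOrbit (τ : Equiv.Perm ℤ) (x : ℤ) : Set ℤ := {y | ∃ m : ℤ, (τ ^ m) x = y}

/-- The partition `Ω(τ)` of `{±1,…,±n}` into orbits of `τ`. -/
def orbitsOn (n : ℕ) (τ : Equiv.Perm ℤ) : Set (Set ℤ) :=
  {A | ∃ x ∈ signedSet n, A = permOrbit τ x}

/-- The negation `-A` of a set `A ⊆ ℤ`. -/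
def negSet (A : Set ℤ) : Set ℤ := {x | -x ∈ A}

/-- The partition `Ω̃(τ)`, obtained from `Ω(τ)` by merging all inversion-invariant orbits
(orbits `A` with `A = -A`) into a single block. -/
def omegaTilde (n : ℕ) (τ : Equiv.Perm ℤ) : Set (Set ℤ) :=
  {A | A ∈ orbitsOn n τ ∧ negSet A ≠ A} ∪
    {B | B = ⋃₀ {A | A ∈ orbitsOn n τ ∧ negSet A = A} ∧ B.Nonempty}

/-- The annular non-crossing partitions of type B: `NC^B(p,q) = {Ω̃(τ) : τ ∈ S^B_nc(p,q)}`. -/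
def NCB (p q : ℕ) : Set (Set (Set ℤ)) :=
  {π | ∃ τ ∈ SncB p q, π = omegaTilde (p + q) τ}

/-- The type B non-crossing partitions of the disc: `NC^B(n) = {Ω̃(τ) : τ ∈ B_n, τ ≤ γ_n}`. -/
def NCBdisc (n : ℕ) : Set (Set (Set ℤ)) :=
  {π | ∃ τ, inB n τ ∧ leB n τ (gammaDisc n) ∧ π = omegaTilde n τ}

/-- Reverse refinement order on partitions: every block of `π` is contained in a block of `ρ`. -/
def refines (π ρ : Set (Set ℤ)) : Prop := ∀ A ∈ π, ∃ B ∈ ρ, A ⊆ B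

/-- The rank of a partition of `{±1,…,±n}`:
`n` minus half the number of blocks `A` with `A ≠ -A`. -/
noncomputable def rankNCB (n : ℕ) (π : Set (Set ℤ)) : ℕ :=
  n - {A | A ∈ π ∧ negSet A ≠ A}.ncard / 2

/-- The inner point set `{±(p+1), …, ±(p+q)}`. -/
def innerSet (p q : ℕ) : Set ℤ := {x : ℤ | (p : ℤ) < |x| ∧ |x| ≤ (p : ℤ) + (q : ℤ)}

/-- The connectivity of `π ∈ NC^B(p,q)`: half the number of blocks `A` with `A ≠ -A`
meeting both `{±1,…,±p}` and `{±(p+1),…,±(p+q)}`. -/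
noncomputable def connectivity (p q : ℕ) (π : Set (Set ℤ)) : ℕ :=
  {A | A ∈ π ∧ negSet A ≠ A ∧ (A ∩ signedSet p).Nonempty ∧
    (A ∩ innerSet p q).Nonempty}.ncard / 2

/-- The number of exterior pairs of blocks `{A, -A}` (with `A ≠ -A`, `A ⊆ {±1,…,±p}`). -/
noncomputable def extPairs (p : ℕ) (π : Set (Set ℤ)) : ℕ :=
  {A | A ∈ π ∧ negSet A ≠ A ∧ A ⊆ signedSet p}.ncard / 2

/-- The number of interior pairs of blocks `{A, -A}`
(with `A ≠ -A`, `A ⊆ {±(p+1),…,±(p+q)}`). -/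
noncomputable def intPairs (p q : ℕ) (π : Set (Set ℤ)) : ℕ :=
  {A | A ∈ π ∧ negSet A ≠ A ∧ A ⊆ innerSet p q}.ncard / 2

/-- The minimum `0̂` of `NC^B(p,q)` (with `n = p+q`): the partition into singletons. -/
def botNCB (n : ℕ) : Set (Set ℤ) := {A | ∃ x ∈ signedSet n, A = {x}}

/-- The maximum `1̂` of `NC^B(p,q)` (with `n = p+q`): the partition with a single block. -/
def topNCB (n : ℕ) : Set (Set ℤ) := {signedSet n}

/-- The orbit of `x` under the subgroup generated by `{τ, γ}`. -/
def jointOrbit (τ γ : Equiv.Perm ℤ) (x : ℤ) : Set ℤ :=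
  {y | ∃ g ∈ Subgroup.closure ({τ, γ} : Set (Equiv.Perm ℤ)), g x = y}

/-- The orbits on `{±1,…,±n}` of the subgroup generated by `{τ, γ}`. -/
def jointOrbitsOn (n : ℕ) (τ γ : Equiv.Perm ℤ) : Set (Set ℤ) :=
  {Y | ∃ x ∈ signedSet n, Y = jointOrbit τ γ x}


/-!
Write `N(τ)` for the number of orbits `A` of `τ` with `-A ≠ A`; they come in pairs `{A, -A}`,
and the identity has `N = 2n`. Multiplying by a generator `g` only affects the orbits meeting
the support `{±a, ±b}` of `g`, and a case analysis on how `±a, ±b` are distributed among orbits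
shows that `N` drops by at most `2`; so a word of length `k` gives `N ≥ 2n - 2k`. Conversely,
if `τ a = b ≠ a`, the generator `(a, b)(-a, -b)`, or `(a, -a)` when `b = -a`, makes `a` and
`-a` fixed points and raises `N` by `2`; as `N ≤ 2n`, this reaches the identity in `n - N/2`
steps.
-/
open Equiv Equiv.Perm

section Orbits

variable {σ g : Perm ℤ} {x y : ℤ} {S : Set ℤ}

theorem mem_permOrbit_iff : y ∈ permOrbit σ x ↔ σ.SameCycle x y := Iff.rfl

theorem permOrbit_eq_permOrbit_iff : permOrbit σ x = permOrbit σ y ↔ σ.SameCycle x y := by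
  refine ⟨fun h => ?_, fun h => Set.ext fun z => ⟨h.symm.trans, h.trans⟩⟩
  have : y ∈ permOrbit σ y := SameCycle.refl σ y
  rwa [← h] at this

theorem Equiv.Perm.SameCycle.mem_iff_of_apply_mem_iff (hS : ∀ z, σ z ∈ S ↔ z ∈ S)
    (h : σ.SameCycle x y) : x ∈ S ↔ y ∈ S := by
  obtain ⟨m, rfl⟩ := h
  induction m using Int.induction_on with
  | zero => rfl
  | succ m ih => rw [add_comm, zpow_one_add, Perm.mul_apply, hS, ih]
  | pred m ih => rw [ih, ← hS ((σ ^ (-(m : ℤ) - 1)) x), ← Perm.mul_apply, ← zpow_one_add,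
      add_sub_cancel]

theorem apply_mem_iff_of_forall_mem_apply_eq (hg : ∀ y ∈ S, g y = y) (z : ℤ) :
    g z ∈ S ↔ z ∈ S :=
  ⟨fun h => g.injective (hg _ h) ▸ h, fun h => (hg z h).symm ▸ h⟩

theorem permOrbit_mul_of_forall_mem_apply_eq (hg : ∀ y ∈ permOrbit σ x, g y = y) :
    permOrbit (g * σ) x = permOrbit σ x := by
  have key : ∀ {σ g : Perm ℤ}, (∀ y ∈ permOrbit σ x, g y = y) →
      permOrbit (g * σ) x ⊆ permOrbit σ x := fun {σ g} hg y hy =>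
    ((mem_permOrbit_iff.1 hy).mem_iff_of_apply_mem_iff fun z => by
      rw [Perm.mul_apply, apply_mem_iff_of_forall_mem_apply_eq hg, mem_permOrbit_iff,
        mem_permOrbit_iff, sameCycle_apply_right]).1 (SameCycle.refl σ x)
  refine (key hg).antisymm ?_
  simpa using key (σ := g * σ) (g := g⁻¹) fun y hy => by
    rw [Perm.inv_eq_iff_eq, hg y (key hg hy)]

end Orbits

section TypeB

variable {n : ℕ} {σ τ : Perm ℤ} {x y : ℤ}

theorem mem_signedSet_iff : x ∈ signedSet n ↔ x ≠ 0 ∧ -(n : ℤ) ≤ x ∧ x ≤ n := by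
  simp only [signedSet, Set.mem_ofPred_eq, abs_le]

theorem signedSet_finite (n : ℕ) : (signedSet n).Finite :=
  (Set.finite_Icc (-(n : ℤ)) n).subset fun _ hx => (mem_signedSet_iff.1 hx).2

theorem ncard_signedSet (n : ℕ) : (signedSet n).ncard = 2 * n := by
  have : signedSet n = ↑((Finset.Icc (-(n : ℤ)) n).erase 0) := by
    ext x
    simp only [mem_signedSet_iff, Finset.coe_erase, Finset.coe_Icc, Set.mem_sdiff, Set.mem_Icc,
      Set.mem_singleton_iff]
    tauto
  rw [this, Set.ncard_coe_finset, Finset.card_erase_of_mem (by simp), Int.card_Icc]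
  omega

theorem neg_mem_signedSet (hx : x ∈ signedSet n) : -x ∈ signedSet n := by
  rw [mem_signedSet_iff] at *
  omega

theorem inB_one (n : ℕ) : inB n 1 := ⟨fun _ => rfl, fun _ _ => rfl⟩

theorem inB.mul (hσ : inB n σ) (hτ : inB n τ) : inB n (σ * τ) :=
  ⟨fun x => by simp only [Perm.mul_apply, hτ.1, hσ.1],
   fun x hx => by simp only [Perm.mul_apply, hτ.2 x hx, hσ.2 x hx]⟩

theorem inB.mem_signedSet_of_apply_ne (hσ : inB n σ) (h : σ x ≠ x) : x ∈ signedSet n :=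
  not_not.1 fun hx => h (hσ.2 x hx)

theorem inB.sameCycle_neg_neg (hσ : inB n σ) : σ.SameCycle (-x) (-y) ↔ σ.SameCycle x y := by
  have hconj : Equiv.neg ℤ * σ * (Equiv.neg ℤ)⁻¹ = σ := by
    ext z
    simp [hσ.1]
  conv_rhs => rw [← hconj, sameCycle_conj]
  simp

theorem inB.negSet_permOrbit (hσ : inB n σ) (x : ℤ) :
    negSet (permOrbit σ x) = permOrbit σ (-x) := by
  ext y
  rw [mem_permOrbit_iff, ← hσ.sameCycle_neg_neg, neg_neg]
  rfl

end TypeB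

def asymOrbits (n : ℕ) (σ : Perm ℤ) : Set (Set ℤ) := {A | A ∈ orbitsOn n σ ∧ negSet A ≠ A}

def asymOrbitsMeeting (n : ℕ) (σ : Perm ℤ) (T : Set ℤ) : Set (Set ℤ) :=
  {A ∈ asymOrbits n σ | ∃ x ∈ T, x ∈ A}

section Counting

variable {n : ℕ} {σ g : Perm ℤ} {T : Set ℤ} {x y : ℤ}

theorem orbitsOn_eq_image (n : ℕ) (σ : Perm ℤ) : orbitsOn n σ = permOrbit σ '' signedSet n := by
  ext A
  simp only [orbitsOn, Set.mem_image, eq_comm (a := A), Set.mem_ofPred_eq]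

theorem asymOrbits_finite (n : ℕ) (σ : Perm ℤ) : (asymOrbits n σ).Finite :=
  ((signedSet_finite n).image _).subset fun _ hA => orbitsOn_eq_image n σ ▸ hA.1

theorem ncard_asymOrbits_le (n : ℕ) (σ : Perm ℤ) : (asymOrbits n σ).ncard ≤ 2 * n :=
  calc (asymOrbits n σ).ncard ≤ (permOrbit σ '' signedSet n).ncard :=
        Set.ncard_le_ncard (fun _ hA => orbitsOn_eq_image n σ ▸ hA.1)
          ((signedSet_finite n).image _)
    _ ≤ 2 * n := ncard_signedSet n ▸ Set.ncard_image_le (signedSet_finite n)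

theorem ncard_asymOrbits_one (n : ℕ) : (asymOrbits n 1).ncard = 2 * n := by
  have horb : permOrbit 1 = fun x => ({x} : Set ℤ) := by
    ext x y
    simp [mem_permOrbit_iff, eq_comm]
  have hasym : asymOrbits n 1 = orbitsOn n 1 := by
    refine Set.sep_eq_self_iff_mem_true.2 fun A hA => ?_
    obtain ⟨x, hx, rfl⟩ := hA
    rw [(inB_one n).negSet_permOrbit, Ne, permOrbit_eq_permOrbit_iff, sameCycle_one]
    exact fun h => hx.1 (by omega)
  rw [hasym, orbitsOn_eq_image, horb, Set.ncard_image_of_injective _ Set.singleton_injective,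
    ncard_signedSet]

theorem eq_permOrbit_of_mem_asymOrbits (hσ : inB n σ) {A : Set ℤ} (hA : A ∈ asymOrbits n σ)
    (hy : y ∈ A) : A = permOrbit σ y ∧ ¬σ.SameCycle y (-y) := by
  obtain ⟨⟨x, -, rfl⟩, hasym⟩ := hA
  rw [permOrbit_eq_permOrbit_iff.2 hy] at hasym ⊢
  refine ⟨rfl, fun h => hasym ?_⟩
  rw [hσ.negSet_permOrbit, permOrbit_eq_permOrbit_iff.2 h.symm]

theorem permOrbit_mem_asymOrbitsMeeting (hσ : inB n σ) (hx : x ∈ signedSet n) (hxT : x ∈ T)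
    (h : ¬σ.SameCycle x (-x)) : permOrbit σ x ∈ asymOrbitsMeeting n σ T :=
  ⟨⟨⟨x, hx, rfl⟩, fun he => h (by
    rw [← permOrbit_eq_permOrbit_iff, ← hσ.negSet_permOrbit, he])⟩, x, hxT, SameCycle.refl σ x⟩

theorem asymOrbits_sdiff_meeting_subset (hg : ∀ z ∉ T, g z = z) :
    asymOrbits n σ \ asymOrbitsMeeting n σ T ⊆
      asymOrbits n (g * σ) \ asymOrbitsMeeting n (g * σ) T := by
  rintro A ⟨⟨⟨x, hx, rfl⟩, hasym⟩, hmeet⟩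
  have hfix : ∀ y ∈ permOrbit σ x, g y = y := fun y hy =>
    hg y fun hyT => hmeet ⟨⟨⟨x, hx, rfl⟩, hasym⟩, y, hyT, hy⟩
  have horb := permOrbit_mul_of_forall_mem_apply_eq hfix
  exact ⟨⟨⟨x, hx, horb.symm⟩, hasym⟩, fun h => hmeet ⟨⟨⟨x, hx, rfl⟩, hasym⟩, horb ▸ h.2⟩⟩

/-- Only the orbits meeting the support `T` of `g` change when `σ` is replaced by `g * σ`. -/
theorem ncard_asymOrbits_mul_add (hg : ∀ z ∉ T, g z = z) :
    (asymOrbits n (g * σ)).ncard + (asymOrbitsMeeting n σ T).ncard =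
      (asymOrbits n σ).ncard + (asymOrbitsMeeting n (g * σ) T).ncard := by
  have hg' : ∀ z ∉ T, g⁻¹ z = z := fun z hz => by rw [Perm.inv_eq_iff_eq, hg z hz]
  have hsdiff := (asymOrbits_sdiff_meeting_subset (n := n) (σ := σ) hg).antisymm
    (by simpa using asymOrbits_sdiff_meeting_subset (n := n) (σ := g * σ) hg')
  have hsplit : ∀ τ : Perm ℤ, (asymOrbits n τ \ asymOrbitsMeeting n τ T).ncard +
      (asymOrbitsMeeting n τ T).ncard = (asymOrbits n τ).ncard := fun τ =>
    Set.ncard_sdiff_add_ncard_of_subset (Set.sep_subset _ _) (asymOrbits_finite n τ)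
  rw [← hsplit σ, ← hsplit (g * σ), hsdiff]
  ring

theorem ncard_asymOrbitsMeeting_le (hT : T.Finite) :
    (asymOrbitsMeeting n σ T).ncard ≤ T.ncard := by
  refine (Set.ncard_le_ncard ?_ (hT.image (permOrbit σ))).trans (Set.ncard_image_le hT)
  rintro A ⟨⟨⟨x, -, rfl⟩, -⟩, y, hyT, hy⟩
  exact ⟨y, hyT, (permOrbit_eq_permOrbit_iff.2 hy).symm⟩

theorem asymOrbitsMeeting_eq_empty (hσ : inB n σ) (hT : ∀ y ∈ T, σ.SameCycle y (-y)) :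
    asymOrbitsMeeting n σ T = ∅ :=
  Set.eq_empty_of_forall_notMem fun _ ⟨hA, y, hyT, hy⟩ =>
    (eq_permOrbit_of_mem_asymOrbits hσ hA hy).2 (hT y hyT)

theorem ncard_asymOrbitsMeeting_le_two (hσ : inB n σ)
    (hT : ∀ y ∈ T, σ.SameCycle x y ∨ σ.SameCycle (-x) y ∨ σ.SameCycle y (-y)) :
    (asymOrbitsMeeting n σ T).ncard ≤ 2 := by
  have hsub : asymOrbitsMeeting n σ T ⊆ {permOrbit σ x, permOrbit σ (-x)} := by
    rintro A ⟨hA, y, hyT, hy⟩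
    obtain ⟨rfl, hasym⟩ := eq_permOrbit_of_mem_asymOrbits hσ hA hy
    rcases hT y hyT with h | h | h
    · exact .inl (permOrbit_eq_permOrbit_iff.2 h).symm
    · exact .inr (permOrbit_eq_permOrbit_iff.2 h).symm
    · exact absurd h hasym
  exact (Set.ncard_le_ncard hsub (Set.toFinite _)).trans
    ((Set.ncard_insert_le _ _).trans (by simp))

theorem two_le_ncard_asymOrbitsMeeting (hσ : inB n σ) (hx : x ∈ signedSet n) (hxT : x ∈ T)
    (hnxT : -x ∈ T) (h : ¬σ.SameCycle x (-x)) : 2 ≤ (asymOrbitsMeeting n σ T).ncard := by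
  have hnx : ¬σ.SameCycle (-x) (-(-x)) := by rwa [hσ.sameCycle_neg_neg]
  have hsub : {permOrbit σ x, permOrbit σ (-x)} ⊆ asymOrbitsMeeting n σ T :=
    Set.insert_subset (permOrbit_mem_asymOrbitsMeeting hσ hx hxT h) <|
      Set.singleton_subset_iff.2 <| permOrbit_mem_asymOrbitsMeeting hσ
        (neg_mem_signedSet hx) hnxT hnx
  calc 2 = ({permOrbit σ x, permOrbit σ (-x)} : Set (Set ℤ)).ncard :=
        (Set.ncard_pair (mt permOrbit_eq_permOrbit_iff.1 h)).symm
    _ ≤ _ := Set.ncard_le_ncard hsub ((asymOrbits_finite n σ).subset (Set.sep_subset _ _))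

theorem four_le_ncard_asymOrbitsMeeting (hσ : inB n σ) (hx : x ∈ signedSet n)
    (hy : y ∈ signedSet n) (hxx : ¬σ.SameCycle x (-x)) (hyy : ¬σ.SameCycle y (-y))
    (hxy : ¬σ.SameCycle x y) (hxny : ¬σ.SameCycle x (-y)) :
    4 ≤ (asymOrbitsMeeting n σ {x, y, -x, -y}).ncard := by
  have hnxny : ¬σ.SameCycle (-x) (-y) := by rwa [hσ.sameCycle_neg_neg]
  have hynx : ¬σ.SameCycle y (-x) := fun h =>
    hxny (by simpa using (hσ.sameCycle_neg_neg.2 h).symm)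
  have hsub : {permOrbit σ x, permOrbit σ y, permOrbit σ (-x), permOrbit σ (-y)} ⊆
      asymOrbitsMeeting n σ {x, y, -x, -y} := by
    simp only [Set.insert_subset_iff, Set.singleton_subset_iff]
    refine ⟨permOrbit_mem_asymOrbitsMeeting hσ hx (by simp) hxx,
      permOrbit_mem_asymOrbitsMeeting hσ hy (by simp) hyy,
      permOrbit_mem_asymOrbitsMeeting hσ (neg_mem_signedSet hx) (by simp)
        (by rwa [hσ.sameCycle_neg_neg]),
      permOrbit_mem_asymOrbitsMeeting hσ (neg_mem_signedSet hy) (by simp)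
        (by rwa [hσ.sameCycle_neg_neg])⟩
  have hcard : ({permOrbit σ x, permOrbit σ y, permOrbit σ (-x), permOrbit σ (-y)} :
      Set (Set ℤ)).ncard = 4 := by
    refine Set.ncard_eq_four.2 ⟨_, _, _, _, ?_, ?_, ?_, ?_, ?_, ?_, rfl⟩ <;>
      rwa [Ne, permOrbit_eq_permOrbit_iff]
  exact hcard ▸ Set.ncard_le_ncard hsub ((asymOrbits_finite n σ).subset (Set.sep_subset _ _))

end Counting

/-- Both families `(i, j)(-i, -j)` and `(i, -j)(-i, j)` of `genB`, with `a, b` of any signs. -/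
def doubleSwap (a b : ℤ) : Perm ℤ := swap a b * swap (-a) (-b)

section Generators

variable {n : ℕ} {a b z : ℤ} {S : Set ℤ} {g : Perm ℤ}

theorem swap_apply_mem_iff (h : a ∈ S ↔ b ∈ S) : swap a b z ∈ S ↔ z ∈ S := by
  rw [swap_apply_def]
  split_ifs with ha hb
  · rw [ha, h]
  · rw [hb, h]
  · rfl

theorem doubleSwap_apply_mem_iff (h : a ∈ S ↔ b ∈ S) (hn : -a ∈ S ↔ -b ∈ S) :
    doubleSwap a b z ∈ S ↔ z ∈ S := by
  rw [doubleSwap, Perm.mul_apply, swap_apply_mem_iff h, swap_apply_mem_iff hn]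

theorem doubleSwap_apply_of_notMem (hz : z ∉ ({a, b, -a, -b} : Set ℤ)) :
    doubleSwap a b z = z := by
  simp only [Set.mem_insert_iff, Set.mem_singleton_iff, not_or] at hz
  obtain ⟨ha, hb, hna, hnb⟩ := hz
  rw [doubleSwap, Perm.mul_apply, swap_apply_of_ne_of_ne hna hnb, swap_apply_of_ne_of_ne ha hb]

theorem doubleSwap_apply_right (hb : b ≠ 0) (hbna : b ≠ -a) : doubleSwap a b b = a := by
  rw [doubleSwap, Perm.mul_apply, swap_apply_of_ne_of_ne hbna (by omega), swap_apply_right]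

theorem commute_swap_swap_neg (ha : a ≠ 0) (hb : b ≠ 0) (hba : b ≠ a) (hbna : b ≠ -a) :
    Commute (swap a b) (swap (-a) (-b)) :=
  (disjoint_swap_swap (by simp; omega)).commute

theorem doubleSwap_mul_self (ha : a ≠ 0) (hb : b ≠ 0) (hba : b ≠ a) (hbna : b ≠ -a) :
    doubleSwap a b * doubleSwap a b = 1 := by
  rw [doubleSwap, (commute_swap_swap_neg ha hb hba hbna).symm.mul_mul_mul_comm, swap_mul_self,
    swap_mul_self, one_mul]

theorem doubleSwap_neg_neg (ha : a ≠ 0) (hb : b ≠ 0) (hba : b ≠ a) (hbna : b ≠ -a) :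
    doubleSwap (-a) (-b) = doubleSwap a b := by
  rw [doubleSwap, doubleSwap, neg_neg, neg_neg]
  exact (commute_swap_swap_neg ha hb hba hbna).eq.symm

theorem inB_doubleSwap (ha : a ∈ signedSet n) (hb : b ∈ signedSet n) (hba : b ≠ a)
    (hbna : b ≠ -a) : inB n (doubleSwap a b) := by
  refine ⟨fun z => ?_, fun z hz => doubleSwap_apply_of_notMem ?_⟩
  · have := ha.1
    have := hb.1
    simp only [doubleSwap, Perm.mul_apply, swap_apply_def]
    split_ifs <;> omega
  · rintro (rfl | rfl | rfl | rfl)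
    exacts [hz ha, hz hb, hz (neg_mem_signedSet ha), hz (neg_mem_signedSet hb)]

theorem inB_swap_neg (ha : a ∈ signedSet n) : inB n (swap a (-a)) := by
  refine ⟨fun z => ?_, fun z hz => swap_apply_of_ne_of_ne ?_ ?_⟩
  · simp only [swap_apply_def]
    split_ifs <;> omega
  · rintro rfl
    exact hz ha
  · rintro rfl
    exact hz (neg_mem_signedSet ha)

theorem swap_neg_mem_genB (ha : a ∈ signedSet n) : swap a (-a) ∈ genB n := by
  rw [mem_signedSet_iff] at ha
  right; right
  rcases lt_or_gt_of_ne ha.1 with hneg | hpos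
  · exact ⟨-a, by omega, by omega, by rw [neg_neg, swap_comm]⟩
  · exact ⟨a, by omega, by omega, rfl⟩

theorem doubleSwap_mem_genB (ha : a ∈ signedSet n) (hb : b ∈ signedSet n) (hba : b ≠ a)
    (hbna : b ≠ -a) : doubleSwap a b ∈ genB n := by
  wlog hpos : 0 < a generalizing a b
  · have hpos' : 0 < -a := by have := ha.1; omega
    rw [← doubleSwap_neg_neg ha.1 hb.1 hba hbna]
    exact this (neg_mem_signedSet ha) (neg_mem_signedSet hb) (by omega) (by omega) hpos'
  rw [mem_signedSet_iff] at ha hb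
  rcases lt_or_gt_of_ne hb.1 with hbneg | hbpos
  · exact .inr <| .inl ⟨a, -b, by omega, by omega, by omega, by omega, by omega, by
      rw [neg_neg]; rfl⟩
  · exact .inl ⟨a, b, by omega, by omega, by omega, by omega, by omega, rfl⟩

theorem mem_genB_cases (hg : g ∈ genB n) :
    (∃ a ∈ signedSet n, g = swap a (-a)) ∨
      ∃ a ∈ signedSet n, ∃ b ∈ signedSet n, b ≠ a ∧ b ≠ -a ∧ g = doubleSwap a b := by
  simp only [mem_signedSet_iff]
  rcases hg with ⟨i, j, hi, hin, hj, hjn, hij, rfl⟩ | ⟨i, j, hi, hin, hj, hjn, hij, rfl⟩ |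
    ⟨i, hi, hin, rfl⟩
  · exact .inr ⟨i, by omega, j, by omega, by omega, by omega, rfl⟩
  · exact .inr ⟨i, by omega, -j, by omega, by omega, by omega, by rw [doubleSwap, neg_neg]⟩
  · exact .inl ⟨i, by omega, rfl⟩

theorem mul_self_eq_one_of_mem_genB (hg : g ∈ genB n) : g * g = 1 := by
  rcases mem_genB_cases hg with ⟨a, -, rfl⟩ | ⟨a, ha, b, hb, hba, hbna, rfl⟩
  · exact swap_mul_self a (-a)
  · exact doubleSwap_mul_self ha.1 hb.1 hba hbna

theorem inB_of_mem_genB (hg : g ∈ genB n) : inB n g := by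
  rcases mem_genB_cases hg with ⟨a, ha, rfl⟩ | ⟨a, ha, b, hb, hba, hbna, rfl⟩
  · exact inB_swap_neg ha
  · exact inB_doubleSwap ha hb hba hbna

theorem inB_list_prod {l : List (Perm ℤ)} (hl : ∀ g ∈ l, g ∈ genB n) : inB n l.prod := by
  induction l with
  | nil => exact inB_one n
  | cons g l ih =>
    rw [List.forall_mem_cons] at hl
    exact (inB_of_mem_genB hl.1).mul (ih hl.2)

end Generators

section LowerBound

variable {n : ℕ} {σ : Perm ℤ} {a b : ℤ}

theorem ncard_asymOrbits_le_swap_neg_mul_add_two (a : ℤ) (σ : Perm ℤ) :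
    (asymOrbits n σ).ncard ≤ (asymOrbits n (swap a (-a) * σ)).ncard + 2 := by
  have hcount := ncard_asymOrbits_mul_add (n := n) (σ := σ) (T := {a, -a})
    fun z hz => swap_apply_of_ne_of_ne (fun h => hz (.inl h)) fun h => hz (.inr h)
  have hmeet := ncard_asymOrbitsMeeting_le (n := n) (σ := σ) (Set.toFinite {a, -a})
  have hT : ({a, -a} : Set ℤ).ncard ≤ 2 := by
    rw [← Finset.coe_pair, Set.ncard_coe_finset]
    exact Finset.card_le_two
  omega

/-- The union of the `σ`-orbits of `a` and `b` is invariant under `doubleSwap a b * σ`. -/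
theorem not_sameCycle_neg_doubleSwap_mul (hσ : inB n σ) (haa : ¬σ.SameCycle a (-a))
    (hbb : ¬σ.SameCycle b (-b)) (hab : ¬σ.SameCycle a (-b)) :
    ¬(doubleSwap a b * σ).SameCycle a (-a) := by
  have hba : ¬σ.SameCycle b (-a) := fun h =>
    hab (by simpa using (hσ.sameCycle_neg_neg.2 h).symm)
  set S : Set ℤ := {y | σ.SameCycle a y ∨ σ.SameCycle b y}
  have hS : ∀ z, (doubleSwap a b * σ) z ∈ S ↔ z ∈ S := fun z => by
    rw [Perm.mul_apply, doubleSwap_apply_mem_iff (by simp [S, SameCycle.refl])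
      (by simp [S, haa, hba, hab, hbb])]
    simp only [S, Set.mem_ofPred_eq, sameCycle_apply_right]
  have hna : -a ∉ S := by simp [S, haa, hba]
  exact fun h => hna ((h.mem_iff_of_apply_mem_iff hS).1 (.inl .rfl))

theorem ncard_asymOrbits_le_doubleSwap_mul_add_two (hσ : inB n σ) (ha : a ∈ signedSet n)
    (hb : b ∈ signedSet n) (hba : b ≠ a) (hbna : b ≠ -a) :
    (asymOrbits n σ).ncard ≤ (asymOrbits n (doubleSwap a b * σ)).ncard + 2 := by
  set T : Set ℤ := {a, b, -a, -b}
  have hcount := ncard_asymOrbits_mul_add (n := n) (σ := σ) (T := T)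
    fun z hz => doubleSwap_apply_of_notMem hz
  by_cases hc : σ.SameCycle a (-a) ∨ σ.SameCycle b (-b) ∨ σ.SameCycle a b ∨ σ.SameCycle a (-b)
  · have : (asymOrbitsMeeting n σ T).ncard ≤ 2 := by
      rcases hc with h | h | h | h
      · refine ncard_asymOrbitsMeeting_le_two hσ (x := b) ?_
        rintro y (rfl | rfl | rfl | rfl)
        exacts [.inr (.inr h), .inl .rfl, .inr (.inr (by simpa using h.symm)), .inr (.inl .rfl)]
      all_goals refine ncard_asymOrbitsMeeting_le_two hσ (x := a) ?_
      · rintro y (rfl | rfl | rfl | rfl)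
        exacts [.inl .rfl, .inr (.inr h), .inr (.inl .rfl), .inr (.inr (by simpa using h.symm))]
      · rintro y (rfl | rfl | rfl | rfl)
        exacts [.inl .rfl, .inl h, .inr (.inl .rfl), .inr (.inl (hσ.sameCycle_neg_neg.2 h))]
      · rintro y (rfl | rfl | rfl | rfl)
        exacts [.inl .rfl, .inr (.inl (by simpa using hσ.sameCycle_neg_neg.2 h)),
          .inr (.inl .rfl), .inl h]
    omega
  · simp only [not_or] at hc
    obtain ⟨haa, hbb, -, hab⟩ := hc
    have hT : (asymOrbitsMeeting n σ T).ncard ≤ 4 := by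
      refine (ncard_asymOrbitsMeeting_le (Set.toFinite T)).trans ?_
      rw [show T = ↑({a, b, -a, -b} : Finset ℤ) by simp [T], Set.ncard_coe_finset]
      exact Finset.card_le_four
    have : 2 ≤ (asymOrbitsMeeting n (doubleSwap a b * σ) T).ncard :=
      two_le_ncard_asymOrbitsMeeting ((inB_doubleSwap ha hb hba hbna).mul hσ) ha (by simp [T])
        (by simp [T]) (not_sameCycle_neg_doubleSwap_mul hσ haa hbb hab)
    omega

theorem ncard_asymOrbits_le_mul_add_two (hσ : inB n σ) {g : Perm ℤ} (hg : g ∈ genB n) :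
    (asymOrbits n σ).ncard ≤ (asymOrbits n (g * σ)).ncard + 2 := by
  rcases mem_genB_cases hg with ⟨a, -, rfl⟩ | ⟨a, ha, b, hb, hba, hbna, rfl⟩
  · exact ncard_asymOrbits_le_swap_neg_mul_add_two a σ
  · exact ncard_asymOrbits_le_doubleSwap_mul_add_two hσ ha hb hba hbna

theorem two_mul_le_two_mul_length_add_ncard {l : List (Perm ℤ)} (hl : ∀ g ∈ l, g ∈ genB n) :
    2 * n ≤ 2 * l.length + (asymOrbits n l.prod).ncard := by
  induction l with
  | nil => simp [ncard_asymOrbits_one]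
  | cons g l ih =>
    rw [List.forall_mem_cons] at hl
    have := ncard_asymOrbits_le_mul_add_two (inB_list_prod hl.2) hl.1
    simp only [List.length_cons, List.prod_cons]
    linarith [ih hl.2]

end LowerBound

section UpperBound

variable {n : ℕ} {τ : Perm ℤ} {a : ℤ}

theorem exists_mem_genB_ncard_add_two_le_of_sameCycle_neg (hτ : inB n τ) (ha : τ a ≠ a)
    (hA : τ.SameCycle a (-a)) :
    ∃ g ∈ genB n, (asymOrbits n τ).ncard + 2 ≤ (asymOrbits n (g * τ)).ncard := by
  have ha' := hτ.mem_signedSet_of_apply_ne ha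
  have hb' := hτ.mem_signedSet_of_apply_ne fun h => ha (τ.injective h)
  set T : Set ℤ := {a, τ a, -a, -τ a}
  obtain ⟨g, hg, hgT, hfix⟩ : ∃ g ∈ genB n, (∀ z ∉ T, g z = z) ∧ (g * τ) a = a := by
    by_cases hb : τ a = -a
    · refine ⟨swap a (-a), swap_neg_mem_genB ha', fun z hz => swap_apply_of_ne_of_ne
        (fun h => hz (.inl h)) (fun h => hz (.inr (.inr (.inl h)))), ?_⟩
      rw [Perm.mul_apply, hb, swap_apply_right]
    · exact ⟨doubleSwap a (τ a), doubleSwap_mem_genB ha' hb' ha hb,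
        fun z hz => doubleSwap_apply_of_notMem hz, doubleSwap_apply_right hb'.1 hb⟩
  have hall : ∀ y ∈ T, τ.SameCycle a y := by
    rintro y (rfl | rfl | rfl | rfl)
    exacts [.rfl, sameCycle_apply_right.2 .rfl, hA,
      by rw [← hτ.1]; exact sameCycle_apply_right.2 hA]
  have h0 : asymOrbitsMeeting n τ T = ∅ := asymOrbitsMeeting_eq_empty hτ fun y hy =>
    (hall y hy).symm.trans (hA.trans (hτ.sameCycle_neg_neg.2 (hall y hy)))
  have h2 : 2 ≤ (asymOrbitsMeeting n (g * τ) T).ncard :=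
    two_le_ncard_asymOrbitsMeeting ((inB_of_mem_genB hg).mul hτ) ha' (by simp [T])
      (by simp [T]) fun h => (by have := ha'.1; omega : a ≠ -a) (h.eq_of_left hfix)
  have hcount := ncard_asymOrbits_mul_add (n := n) (σ := τ) hgT
  rw [h0, Set.ncard_empty] at hcount
  exact ⟨g, hg, by omega⟩

theorem exists_mem_genB_ncard_add_two_le_of_not_sameCycle_neg (hτ : inB n τ) (ha : τ a ≠ a)
    (hA : ¬τ.SameCycle a (-a)) :
    ∃ g ∈ genB n, (asymOrbits n τ).ncard + 2 ≤ (asymOrbits n (g * τ)).ncard := by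
  have ha' := hτ.mem_signedSet_of_apply_ne ha
  have hb' := hτ.mem_signedSet_of_apply_ne fun h => ha (τ.injective h)
  set b := τ a
  have hab : τ.SameCycle a b := sameCycle_apply_right.2 .rfl
  have hanb : ¬τ.SameCycle a (-b) := fun h =>
    hA (hab.trans (by simpa using (hτ.sameCycle_neg_neg.2 h).symm))
  have hbna : b ≠ -a := fun h => hA (h ▸ hab)
  set σ := doubleSwap a b * τ
  have hcount : (asymOrbits n σ).ncard + (asymOrbitsMeeting n τ {a, b, -a, -b}).ncard =
      (asymOrbits n τ).ncard + (asymOrbitsMeeting n σ {a, b, -a, -b}).ncard :=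
    ncard_asymOrbits_mul_add fun z hz => doubleSwap_apply_of_notMem hz
  have hσ : inB n σ := (inB_doubleSwap ha' hb' ha hbna).mul hτ
  have hfix : σ a = a := doubleSwap_apply_right hb'.1 hbna
  -- the `τ`-orbit of `a` is `σ`-invariant and misses `-b`
  have hσbb : ¬σ.SameCycle b (-b) := by
    set S : Set ℤ := {y | τ.SameCycle a y}
    have hS : ∀ z, σ z ∈ S ↔ z ∈ S := fun z => by
      rw [Perm.mul_apply, doubleSwap_apply_mem_iff (by simp [S, hab, SameCycle.refl])
        (by simp [S, hA, hanb])]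
      exact sameCycle_apply_right
    exact fun h => hanb ((h.mem_iff_of_apply_mem_iff hS).1 hab)
  have h2 : (asymOrbitsMeeting n τ {a, b, -a, -b}).ncard ≤ 2 := by
    refine ncard_asymOrbitsMeeting_le_two hτ (x := a) ?_
    rintro y (rfl | rfl | rfl | rfl)
    exacts [.inl .rfl, .inl hab, .inr (.inl .rfl), .inr (.inl (hτ.sameCycle_neg_neg.2 hab))]
  have h4 : 4 ≤ (asymOrbitsMeeting n σ {a, b, -a, -b}).ncard :=
    four_le_ncard_asymOrbitsMeeting hσ ha' hb'
      (fun h => (by have := ha'.1; omega : a ≠ -a) (h.eq_of_left hfix)) hσbb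
      (fun h => ha (h.eq_of_left hfix).symm) (fun h => hbna (by linarith [h.eq_of_left hfix]))
  refine ⟨doubleSwap a b, doubleSwap_mem_genB ha' hb' ha hbna, ?_⟩
  change _ ≤ (asymOrbits n σ).ncard
  omega

theorem exists_mem_genB_ncard_add_two_le (hτ : inB n τ) (ha : τ a ≠ a) :
    ∃ g ∈ genB n, (asymOrbits n τ).ncard + 2 ≤ (asymOrbits n (g * τ)).ncard := by
  by_cases hA : τ.SameCycle a (-a)
  · exact exists_mem_genB_ncard_add_two_le_of_sameCycle_neg hτ ha hA
  · exact exists_mem_genB_ncard_add_two_le_of_not_sameCycle_neg hτ ha hA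

theorem exists_short_list_prod_eq (hτ : inB n τ) :
    ∃ l : List (Perm ℤ), (∀ g ∈ l, g ∈ genB n) ∧ l.prod = τ ∧
      2 * l.length + (asymOrbits n τ).ncard ≤ 2 * n := by
  induction hk : 2 * n - (asymOrbits n τ).ncard using Nat.strong_induction_on generalizing τ with
  | _ k ih =>
  by_cases h1 : τ = 1
  · subst h1
    exact ⟨[], by simp, rfl, by simpa using ncard_asymOrbits_le n 1⟩
  obtain ⟨a, ha⟩ : ∃ a, τ a ≠ a := not_forall.1 fun h => h1 (Equiv.ext h)
  obtain ⟨g, hg, hN⟩ := exists_mem_genB_ncard_add_two_le hτ ha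
  have hle := ncard_asymOrbits_le n (g * τ)
  obtain ⟨l, hl, hprod, hlen⟩ := ih _ (by omega) ((inB_of_mem_genB hg).mul hτ) rfl
  refine ⟨g :: l, List.forall_mem_cons.2 ⟨hg, hl⟩, ?_, ?_⟩
  · rw [List.prod_cons, hprod, ← mul_assoc, mul_self_eq_one_of_mem_genB hg, one_mul]
  · simp only [List.length_cons]
    omega

end UpperBound

/-- For every `τ ∈ B_n`, the length `ℓ_B(τ)` equals
`n - (1/2)·#{orbits A of τ with A ≠ -A}`. -/
theorem lenB_eq (n : ℕ) (τ : Equiv.Perm ℤ) (hτ : inB n τ) :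
    lenB n τ = n - {A | A ∈ orbitsOn n τ ∧ negSet A ≠ A}.ncard / 2 := by
  change lenB n τ = n - (asymOrbits n τ).ncard / 2
  obtain ⟨l, hl, hprod, hlen⟩ := exists_short_list_prod_eq hτ
  have hmem : l.length ∈ {k | ∃ l : List (Perm ℤ),
      l.length = k ∧ (∀ g ∈ l, g ∈ genB n) ∧ l.prod = τ} := ⟨l, rfl, hl, hprod⟩
  refine le_antisymm ?_ (le_csInf ⟨_, hmem⟩ ?_)
  · have := Nat.sInf_le hmem
    unfold lenB
    omega
  · rintro k ⟨l', rfl, hl', rfl⟩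
    have := two_mul_le_two_mul_length_add_ncard hl'
    omega
end

section
/- For all positive integers p and q, the binomial identity Σ_{c=1}^{min{p,q}} 2c · C(2p, p-c) · C(2q, q-c) = (pq/(p+q)) · C(2p, p) · C(2q, q) holds. -/
/-! The identity telescopes: with `a_p(c) = C(2p, p+c)`, the ratio rule
`(p+c+1) a_p(c+1) = (p-c) a_p(c)` gives
`(p+c)(q+c) a_p(c) a_q(c) - (p+c+1)(q+c+1) a_p(c+1) a_q(c+1) = 2c(p+q) a_p(c) a_q(c)`,
and summing over `c` from `0` past `min p q` leaves `pq C(2p,p) C(2q,q)`. -/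

theorem Nat.cast_succ_mul_choose_succ {R : Type*} [CommRing R] (n k : ℕ) :
    ((k : R) + 1) * n.choose (k + 1) = ((n : R) - k) * n.choose k := by
  rcases le_or_gt k n with hk | hk
  · rw [← Nat.cast_sub hk, ← Nat.cast_add_one, ← Nat.cast_mul, ← Nat.cast_mul, mul_comm,
      Nat.choose_succ_right_eq, mul_comm]
  · simp [Nat.choose_eq_zero_of_lt hk, Nat.choose_eq_zero_of_lt (Nat.lt_succ_of_lt hk)]

theorem Nat.cast_succ_mul_choose_two_mul_add_succ {R : Type*} [CommRing R] (p c : ℕ) :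
    ((p : R) + c + 1) * (2 * p).choose (p + c + 1) = ((p : R) - c) * (2 * p).choose (p + c) := by
  have h := Nat.cast_succ_mul_choose_succ (R := R) (2 * p) (p + c)
  push_cast at h
  linear_combination h

def dixonPotential (p q c : ℕ) : ℤ :=
  ((p : ℤ) + c) * ((q : ℤ) + c) * (2 * p).choose (p + c) * (2 * q).choose (q + c)

theorem dixonPotential_sub_succ (p q c : ℕ) :
    dixonPotential p q c - dixonPotential p q (c + 1) =
      2 * c * ((p : ℤ) + q) * (2 * p).choose (p + c) * (2 * q).choose (q + c) := by
  have hp := Nat.cast_succ_mul_choose_two_mul_add_succ (R := ℤ) p c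
  have hq := Nat.cast_succ_mul_choose_two_mul_add_succ (R := ℤ) q c
  simp only [dixonPotential, Nat.cast_add_one, ← add_assoc]
  linear_combination (-((q : ℤ) + c + 1) * (2 * q).choose (q + c + 1)) * hp -
    ((p : ℤ) - c) * (2 * p).choose (p + c) * hq

theorem dixonPotential_eq_zero_of_lt {p q c : ℕ} (h : min p q < c) :
    dixonPotential p q c = 0 := by
  rcases min_lt_iff.mp h with hp | hq
  · simp [dixonPotential, Nat.choose_eq_zero_of_lt (by omega : 2 * p < p + c)]
  · simp [dixonPotential, Nat.choose_eq_zero_of_lt (by omega : 2 * q < q + c)]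

theorem add_mul_sum_two_mul_choose_mul_choose (p q : ℕ) :
    (p + q) * ∑ c ∈ Finset.range (min p q + 1),
        2 * c * (2 * p).choose (p + c) * (2 * q).choose (q + c) =
      p * q * (2 * p).choose p * (2 * q).choose q := by
  have htel := Finset.sum_range_sub' (dixonPotential p q) (min p q + 1)
  simp only [dixonPotential_sub_succ, dixonPotential_eq_zero_of_lt (Nat.lt_succ_self _)] at htel
  have h0 : dixonPotential p q 0 = p * q * (2 * p).choose p * (2 * q).choose q := by
    simp [dixonPotential]
  rw [h0, sub_zero] at htel
  apply Nat.cast_injective (R := ℤ)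
  push_cast
  rw [Finset.mul_sum, ← htel]
  exact Finset.sum_congr rfl fun c _ => by ring

theorem sum_Icc_choose_sub_eq_sum_range_choose_add (p q : ℕ) :
    ∑ c ∈ Finset.Icc 1 (min p q), 2 * c * (2 * p).choose (p - c) * (2 * q).choose (q - c) =
      ∑ c ∈ Finset.range (min p q + 1), 2 * c * (2 * p).choose (p + c) * (2 * q).choose (q + c) := by
  rw [Finset.range_eq_Ico, Finset.sum_eq_sum_Ico_succ_bot (Nat.succ_pos _), mul_zero, zero_mul,
    zero_mul, zero_add]
  refine Finset.sum_congr rfl fun c hc => ?_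
  have hcm := (Finset.mem_Icc.mp hc).2
  rw [Nat.choose_symm_of_eq_add (by omega : 2 * p = (p - c) + (p + c)),
    Nat.choose_symm_of_eq_add (by omega : 2 * q = (q - c) + (q + c))]

theorem binomial_identity_dixon_general (p q : ℕ) :
    ((∑ c ∈ Finset.Icc 1 (min p q),
        2 * c * Nat.choose (2 * p) (p - c) * Nat.choose (2 * q) (q - c) : ℕ) : ℚ) =
      ((p : ℚ) * q / ((p : ℚ) + q)) * (Nat.choose (2 * p) p : ℚ) *
        (Nat.choose (2 * q) q : ℚ) := by
  rcases Nat.eq_zero_or_pos (p + q) with hpq | hpq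
  · obtain ⟨rfl, rfl⟩ : p = 0 ∧ q = 0 := by omega
    simp
  have key := add_mul_sum_two_mul_choose_mul_choose p q
  rw [← sum_Icc_choose_sub_eq_sum_range_choose_add] at key
  have hpq' : (p : ℚ) + q ≠ 0 := by exact_mod_cast hpq.ne'
  rw [div_mul_eq_mul_div, div_mul_eq_mul_div, eq_div_iff hpq', mul_comm]
  exact_mod_cast key

/-- For all positive integers `p`, `q`:
`Σ_{c=1}^{min{p,q}} 2c·C(2p,p-c)·C(2q,q-c) = (pq/(p+q))·C(2p,p)·C(2q,q)`. -/
theorem binomial_identity_dixon (p q : ℕ) (hp : 1 ≤ p) (hq : 1 ≤ q) :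
    ((∑ c ∈ Finset.Icc 1 (min p q),
        2 * c * Nat.choose (2 * p) (p - c) * Nat.choose (2 * q) (q - c) : ℕ) : ℚ) =
      ((p : ℚ) * q / ((p : ℚ) + q)) * (Nat.choose (2 * p) p : ℚ) *
        (Nat.choose (2 * q) q : ℚ) :=
  binomial_identity_dixon_general p q
end
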